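/- Let F be an algebraically closed field of characteristic 2 and let g = u^2 + x_1 x_2 u + x_1^2 n_2 + x_2^2 n_1 ∈ F[x_1, x_2, n_1, n_2, u]. Then the singular locus of the hypersurface {g = 0} in affine 5-space over F, i.e. the set of points e ∈ F^5 with g(e) = 0 and all five partial derivatives of g vanishing at e, is exactly {(0,0,a,b,0) : a,b ∈ F}; in particular the singular locus of the quotient variety (V_2 ⊕ V_2)/C_4 is isomorphic to the affine plane A^2_F. -/

import Mathlib

/-! The partial derivatives of `g` in `n₁` and `n₂` are `x₂²` and `x₁²`, so a singular point has
`x₁ = x₂ = 0`, and then `g = u²` forces `u = 0`. Conversely every partial derivative of `g` lies in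
the ideal `(x₁, x₂, u)`, so all of `{x₁ = x₂ = u = 0}` is singular. -/

open MvPolynomial

set_option synthInstance.maxHeartbeats 1000000
set_option maxHeartbeats 1000000

noncomputable section

variable (F : Type) [Field F]

/-- The invariant ring (fixed subalgebra) of the algebra endomorphism `σ`;
for `σ` the action of a generator of a finite cyclic group, this is the
ring of invariants of that group. -/
def inva {n : ℕ} (σ : MvPolynomial (Fin n) F →ₐ[F] MvPolynomial (Fin n) F) :
    Subalgebra F (MvPolynomial (Fin n) F) :=
  AlgHom.equalizer σ (AlgHom.id F _)

/-- The linear substitution action of a matrix on the polynomial ring. -/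
def matAct {n : ℕ} (M : Matrix (Fin n) (Fin n) F) :
    MvPolynomial (Fin n) F →ₐ[F] MvPolynomial (Fin n) F :=
  aeval fun i => ∑ j, C (M i j) * X j

/-- The irrelevant (maximal graded) ideal of a graded subalgebra of a
polynomial ring: elements with vanishing constant term. -/
def mmax {n : ℕ} (A : Subalgebra F (MvPolynomial (Fin n) F)) : Ideal A :=
  RingHom.ker ((constantCoeff : MvPolynomial (Fin n) F →+* F).comp A.val.toRingHom)

/-- A graded subalgebra of a polynomial ring is Cohen-Macaulay iff there
is a regular sequence in the irrelevant maximal ideal whose length is the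
Krull dimension (i.e. depth = dimension). -/
def IsCM {n : ℕ} (A : Subalgebra F (MvPolynomial (Fin n) F)) : Prop :=
  ∃ rs : List A, (∀ r ∈ rs, r ∈ mmax F A) ∧ RingTheory.Sequence.IsRegular (↥A) rs ∧
    (rs.length : WithBot ℕ∞) = ringKrullDim ↥A

/-- Gorenstein: Cohen-Macaulay, with one-dimensional socle modulo a maximal
regular sequence (a homogeneous system of parameters). -/
def IsGor {n : ℕ} (A : Subalgebra F (MvPolynomial (Fin n) F)) : Prop :=
  ∃ rs : List A, (∀ r ∈ rs, r ∈ mmax F A) ∧ RingTheory.Sequence.IsRegular (↥A) rs ∧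
    (rs.length : WithBot ℕ∞) = ringKrullDim ↥A ∧
    Module.finrank F (Submodule.restrictScalars F
      ((⊥ : Ideal (↥A ⧸ Ideal.span {x : ↥A | x ∈ rs})).colon
        ((mmax F A).map (Ideal.Quotient.mk (Ideal.span {x : ↥A | x ∈ rs}))))) = 1

/-- A commutative `F`-algebra is a hypersurface if it is isomorphic to a
polynomial ring modulo a single principal ideal. -/
def IsHypersurface (A : Type) [CommRing A] [Algebra F A] : Prop :=
  ∃ (m : ℕ) (f : MvPolynomial (Fin m) F),
    Nonempty (A ≃ₐ[F] (MvPolynomial (Fin m) F ⧸ Ideal.span {f}))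

/-- Similarity (conjugacy) of square matrices, i.e. isomorphism of the
corresponding representations. -/
def MatSimilar {n : ℕ} (M N : Matrix (Fin n) (Fin n) F) : Prop :=
  ∃ P : (Matrix (Fin n) (Fin n) F)ˣ,
    (P : Matrix (Fin n) (Fin n) F) * M * ((P⁻¹ : (Matrix (Fin n) (Fin n) F)ˣ) :
      Matrix (Fin n) (Fin n) F) = N

/-- The representation given by `M` has a direct summand isomorphic to the
one-dimensional trivial representation. -/
def HasTrivialSummand {n : ℕ} (M : Matrix (Fin n) (Fin n) F) : Prop :=
  ∃ v : Fin n → F, v ≠ 0 ∧ M.mulVec v = v ∧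
    ∃ Uc : Submodule F (Fin n → F), IsCompl (Submodule.span F {v}) Uc ∧
      ∀ u ∈ Uc, M.mulVec u ∈ Uc

/-- A representation is reduced if no indecomposable direct summand is the
one-dimensional trivial representation. -/
def Reduced {n : ℕ} (M : Matrix (Fin n) (Fin n) F) : Prop :=
  ¬ HasTrivialSummand F M

/-- Matrix consisting of Jordan-like blocks: diagonal entries given by `d`,
with subdiagonal entries `1` exactly at the columns in `ones`. -/
def jmat (n : ℕ) (d : ℕ → F) (ones : Finset ℕ) : Matrix (Fin n) (Fin n) F :=
  fun i j => if (i : ℕ) = j then d i else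
    if (i : ℕ) = (j : ℕ) + 1 ∧ (j : ℕ) ∈ ones then 1 else 0


/-- The defining equation of the hypersurface `(V₂ ⊕ V₂)/C₄` in `𝔸⁵`,
in the variables `x₁, x₂, n₁, n₂, u`. -/
def gV22 : MvPolynomial (Fin 5) F :=
  X 4 ^ 2 + X 0 * X 1 * X 4 + X 0 ^ 2 * X 3 + X 1 ^ 2 * X 2

def singularLocus {R σ : Type*} [CommRing R] (f : MvPolynomial σ R) : Set (σ → R) :=
  {e | eval e f = 0 ∧ ∀ i, eval e (pderiv i f) = 0}

def coordinatePlaneEquiv {R : Type*} [Zero R] :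
    {e : Fin 5 → R | ∃ a b : R, e = ![0, 0, a, b, 0]} ≃ R × R where
  toFun e := (e.1 2, e.1 3)
  invFun p := ⟨![0, 0, p.1, p.2, 0], p.1, p.2, rfl⟩
  left_inv := by
    rintro ⟨e, a, b, rfl⟩
    rfl
  right_inv _ := rfl

lemma eval_gV22 (e : Fin 5 → F) :
    eval e (gV22 F) = e 4 ^ 2 + e 0 * e 1 * e 4 + e 0 ^ 2 * e 3 + e 1 ^ 2 * e 2 := by
  simp [gV22]

lemma eval_pderiv_two_gV22 (e : Fin 5 → F) : eval e (pderiv 2 (gV22 F)) = e 1 ^ 2 := by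
  simp [gV22]

lemma eval_pderiv_three_gV22 (e : Fin 5 → F) : eval e (pderiv 3 (gV22 F)) = e 0 ^ 2 := by
  simp [gV22]

lemma eval_pderiv_gV22_eq_zero {e : Fin 5 → F} (h₀ : e 0 = 0) (h₁ : e 1 = 0) (h₄ : e 4 = 0)
    (i : Fin 5) : eval e (pderiv i (gV22 F)) = 0 := by
  fin_cases i <;> simp [gV22, h₀, h₁, h₄]

theorem singularLocus_gV22 :
    singularLocus (gV22 F) = {e : Fin 5 → F | ∃ a b : F, e = ![0, 0, a, b, 0]} := by
  ext e
  constructor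
  · rintro ⟨hg, hd⟩
    have h₁ : e 1 = 0 := pow_eq_zero_iff two_ne_zero |>.mp (eval_pderiv_two_gV22 F e ▸ hd 2)
    have h₀ : e 0 = 0 := pow_eq_zero_iff two_ne_zero |>.mp (eval_pderiv_three_gV22 F e ▸ hd 3)
    have h₄ : e 4 = 0 := by
      rw [eval_gV22, h₀, h₁] at hg
      simpa using hg
    refine ⟨e 2, e 3, funext fun i => ?_⟩
    fin_cases i <;> simp [h₀, h₁, h₄]
  · rintro ⟨a, b, rfl⟩
    exact ⟨by simp [eval_gV22], eval_pderiv_gV22_eq_zero F rfl rfl rfl⟩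

theorem stmt4 :
    {e : Fin 5 → F | eval e (gV22 F) = 0 ∧ ∀ i, eval e (pderiv i (gV22 F)) = 0} =
      {e : Fin 5 → F | ∃ a b : F, e = ![0, 0, a, b, 0]} ∧
    Nonempty
      ({e : Fin 5 → F | eval e (gV22 F) = 0 ∧ ∀ i, eval e (pderiv i (gV22 F)) = 0}
        ≃ (F × F)) :=
  ⟨singularLocus_gV22 F, ⟨(Equiv.setCongr (singularLocus_gV22 F)).trans coordinatePlaneEquiv⟩⟩

end
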